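/- If a cosimplicial (not necessarily commutative) k-algebra A is [0,1]-generated — i.e. the normalized differential graded algebra N(A) is generated in degrees 0 and 1 under the cup product and k-linear sums — then the total differential graded algebra C(A) is also generated in degrees 0 and 1 under the cup product and k-linear sums. -/

import Mathlib

/-!
Cupping with the unit `1 ∈ X¹` on the left or on the right gives the outer cofaces `d⁰` and
`dⁿ⁺¹`, and a coface of a cup product `x ∪ y` is the cup product of a coface of `x` with `y`
or of `x` with a coface of `y`. Hence the elements generated by `X⁰` and `X¹` are closed under
all cofaces as soon as `d¹x` is generated for every `x ∈ X¹`. Writing `x = ν + d¹s⁰x` with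
`ν ∈ N¹`, we have `d¹d¹ = d²d¹`, and `d¹ν = d⁰ν + d²ν - ∂ν` where `∂ν = d⁰ν - d¹ν + d²ν`
lies in `N²` and so is generated by hypothesis. Finally every `x ∈ Xⁿ⁺¹` is a normalized
element plus a sum of cofaces of elements of `Xⁿ`: subtracting `dʲ⁺¹sʲx` for
`j = 0, …, n` successively kills all degeneracies.
-/

open CategoryTheory

namespace Stmt16

variable {k : Type} [Field k]

/-- The degree-`n` part of a cosimplicial `k`-algebra. -/
abbrev A (X : CosimplicialObject (AlgCat k)) (n : ℕ) : Type :=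
  X.obj (SimplexCategory.mk n)

/-- Iterated top cofaces `d^{p+q} ⋯ d^{p+1} : X^p → X^{p+q}`. -/
def front (X : CosimplicialObject (AlgCat k)) (p : ℕ) :
    ∀ q : ℕ, A X p → A X (p + q)
  | 0 => fun x => x
  | q + 1 => fun x => X.δ (Fin.last (p + q + 1)) (front X p q x)

/-- Iterated zeroth cofaces `d⁰ ⋯ d⁰ : X^q → X^{q+p}`. -/
def back (X : CosimplicialObject (AlgCat k)) (q : ℕ) :
    ∀ p : ℕ, A X q → A X (q + p)
  | 0 => fun y => y
  | p + 1 => fun y => X.δ (0 : Fin (q + p + 2)) (back X q p y)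

/-- The Alexander–Whitney cup product
`x ∪ y := (d^{p+q}⋯d^{p+1} x) · (d⁰⋯d⁰ y) : X^{p+q}` for `x ∈ X^p`, `y ∈ X^q`. -/
def cup (X : CosimplicialObject (AlgCat k)) {p q : ℕ}
    (x : A X p) (y : A X q) : A X (p + q) :=
  front X p q x * (Nat.add_comm q p ▸ back X q p y)

/-- The normalized part `N^n(X) = ∩_{i=0}^{n−1} ker(s^i)` of a cosimplicial algebra. -/
def Nrm (X : CosimplicialObject (AlgCat k)) : ∀ n : ℕ, Set (A X n)
  | 0 => Set.univ
  | m + 1 => {x | ∀ i : Fin (m + 1), X.σ i x = 0}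

/-- The closure of a family of subsets `S n ⊆ X^n` under `k`-linear sums and the cup
product: `CupGen X S n x` says that `x ∈ X^n` is generated by the elements of `S` under
cup products and `k`-linear combinations. -/
inductive CupGen (X : CosimplicialObject (AlgCat k))
    (S : ∀ n : ℕ, Set (A X n)) : ∀ n : ℕ, A X n → Prop
  | of {n : ℕ} {x : A X n} (hx : x ∈ S n) : CupGen X S n x
  | zero {n : ℕ} : CupGen X S n 0
  | add {n : ℕ} {x y : A X n} : CupGen X S n x → CupGen X S n y → CupGen X S n (x + y)
  | smul {n : ℕ} (c : k) {x : A X n} : CupGen X S n x → CupGen X S n (c • x)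
  | cup {p q : ℕ} {x : A X p} {y : A X q} :
      CupGen X S p x → CupGen X S q y → CupGen X S (p + q) (cup X x y)

/-- Generators for `N(X)` in degrees `0` and `1`: all of `N⁰(X) = X⁰` and `N¹(X)`. -/
def gensN (X : CosimplicialObject (AlgCat k)) : ∀ n : ℕ, Set (A X n)
  | 0 => Set.univ
  | 1 => Nrm X 1
  | _ + 2 => ∅

/-- Generators for `C(X)` in degrees `0` and `1`: all of `X⁰` and `X¹`. -/
def gensC (X : CosimplicialObject (AlgCat k)) : ∀ n : ℕ, Set (A X n)
  | 0 => Set.univ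
  | 1 => Set.univ
  | _ + 2 => ∅

section CosimplicialIdentities

variable (X : CosimplicialObject (AlgCat k)) {n : ℕ}

lemma δ_δ_apply {i j : Fin (n + 2)} (H : i ≤ j) (w : A X n) :
    X.δ j.succ (X.δ i w) = X.δ i.castSucc (X.δ j w) :=
  ConcreteCategory.congr_hom (X.δ_comp_δ H) w

lemma σ_δ_castSucc_apply {i : Fin (n + 1)} (w : A X n) : X.σ i (X.δ i.castSucc w) = w :=
  ConcreteCategory.congr_hom X.δ_comp_σ_self w

lemma σ_δ_succ_apply {i : Fin (n + 1)} (w : A X n) : X.σ i (X.δ i.succ w) = w :=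
  ConcreteCategory.congr_hom X.δ_comp_σ_succ w

lemma σ_δ_apply_of_le {i : Fin (n + 2)} {j : Fin (n + 1)} (H : i ≤ j.castSucc)
    (w : A X (n + 1)) : X.σ j.succ (X.δ i.castSucc w) = X.δ i (X.σ j w) :=
  ConcreteCategory.congr_hom (X.δ_comp_σ_of_le H) w

lemma σ_δ_apply_of_gt {i : Fin (n + 2)} {j : Fin (n + 1)} (H : j.castSucc < i)
    (w : A X (n + 1)) : X.σ j.castSucc (X.δ i.succ w) = X.δ i (X.σ j w) :=
  ConcreteCategory.congr_hom (X.δ_comp_σ_of_gt H) w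

lemma σ_σ_apply {i j : Fin (n + 1)} (H : i ≤ j) (w : A X (n + 2)) :
    X.σ j (X.σ i.castSucc w) = X.σ i (X.σ j.succ w) :=
  ConcreteCategory.congr_hom (X.σ_comp_σ H) w

end CosimplicialIdentities

section Normalization

variable (X : CosimplicialObject (AlgCat k))

lemma σ_sub_δ_σ_eq_zero {m j : ℕ} (hj : j < m + 1) {x : A X (m + 1)}
    (hx : ∀ i : Fin (m + 1), (i : ℕ) < j → X.σ i x = 0) (i : Fin (m + 1)) (hi : (i : ℕ) ≤ j) :
    X.σ i (x - X.δ (⟨j + 1, by omega⟩ : Fin (m + 2)) (X.σ ⟨j, hj⟩ x)) = 0 := by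
  obtain ⟨i, hi'⟩ := i
  dsimp only at hi
  rw [map_sub, sub_eq_zero]
  obtain rfl | hij := hi.eq_or_lt
  · exact (σ_δ_succ_apply X (i := ⟨i, hj⟩) _).symm
  obtain ⟨m, rfl⟩ : ∃ m', m = m' + 1 := ⟨m - 1, by omega⟩
  obtain ⟨j, rfl⟩ : ∃ j', j = j' + 1 := ⟨j - 1, by omega⟩
  have hσσ := σ_σ_apply X (i := ⟨i, by omega⟩) (j := ⟨j, by omega⟩)
    (Fin.mk_le_mk.mpr (by omega)) x
  have hσδ := σ_δ_apply_of_gt X (i := ⟨j + 1, by omega⟩) (j := ⟨i, by omega⟩)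
    (Fin.mk_lt_mk.mpr (by omega)) (X.σ ⟨j + 1, hj⟩ x)
  simp only [Fin.castSucc_mk, Fin.succ_mk] at hσσ hσδ
  rw [hσδ, ← hσσ, hx ⟨i, _⟩ hij, map_zero, map_zero]

theorem induction_on_normalized {m : ℕ} {P : A X (m + 1) → Prop}
    (normalized : ∀ x ∈ Nrm X (m + 1), P x)
    (coface : ∀ (j : Fin (m + 2)) (y : A X m), P (X.δ j y))
    (add : ∀ x y, P x → P y → P (x + y)) (x : A X (m + 1)) : P x := by
  suffices key : ∀ j ≤ m + 1, ∀ x : A X (m + 1),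
      (∀ i : Fin (m + 1), (i : ℕ) < j → X.σ i x = 0) → P x from
    key 0 (Nat.zero_le _) x fun i hi => absurd hi (Nat.not_lt_zero _)
  refine fun j hj => Nat.decreasingInduction (fun j hj ih x hx => ?_)
    (fun x hx => normalized x fun i => hx i i.isLt) hj
  rw [← sub_add_cancel x (X.δ ⟨j + 1, by omega⟩ (X.σ ⟨j, hj⟩ x))]
  exact add _ _ (ih _ fun i hi => σ_sub_δ_σ_eq_zero X hj hx i (by omega)) (coface _ _)

end Normalization

section AlexanderWhitney

variable (X : CosimplicialObject (AlgCat k))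

lemma δ_heq_δ {m m' : ℕ} (e : m = m') {i : Fin (m + 2)} {i' : Fin (m' + 2)}
    (hi : (i : ℕ) = i') {a : A X m} {b : A X m'} (hab : a ≍ b) : X.δ i a ≍ X.δ i' b := by
  subst e
  cases Fin.ext hi
  cases hab
  rfl

lemma mul_heq_mul {m m' : ℕ} (e : m = m') {a a' : A X m} {b b' : A X m'}
    (h : a ≍ b) (h' : a' ≍ b') : a * a' ≍ b * b' := by
  subst e
  cases h
  cases h'
  rfl

lemma cast_heq_self {m m' : ℕ} (e : m = m') (z : A X m) : (e ▸ z : A X m') ≍ z := by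
  subst e
  rfl

lemma cast_one {m m' : ℕ} (e : m = m') : (e ▸ (1 : A X m) : A X m') = 1 := by
  subst e
  rfl

lemma front_one (p q : ℕ) : front X p q 1 = 1 := by
  induction q with
  | zero => rfl
  | succ q ih => exact (congrArg _ ih).trans (map_one _)

lemma back_one (q p : ℕ) : back X q p 1 = 1 := by
  induction p with
  | zero => rfl
  | succ p ih => exact (congrArg _ ih).trans (map_one _)

lemma δ_front_of_le {p : ℕ} (x : A X p) :
    ∀ (q v : ℕ) (hv : v ≤ p), X.δ (⟨v, by omega⟩ : Fin (p + q + 2)) (front X p q x) ≍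
      front X (p + 1) q (X.δ (⟨v, by omega⟩ : Fin (p + 2)) x)
  | 0, _, _ => .rfl
  | q + 1, v, hv => by
    have hδδ := δ_δ_apply X (i := (⟨v, by omega⟩ : Fin (p + q + 2))) (j := Fin.last (p + q + 1))
      (by simp only [Fin.le_def, Fin.val_last]; omega) (front X p q x)
    exact (heq_of_eq hδδ.symm).trans <|
      δ_heq_δ X (by omega) (by simp only [Fin.val_succ, Fin.val_last]; omega)
        (δ_front_of_le x q v hv)

lemma δ_front_of_gt {p : ℕ} (x : A X p) :
    ∀ (q v : ℕ), p < v → ∀ hv' : v ≤ p + q + 1,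
      X.δ (⟨v, by omega⟩ : Fin (p + q + 2)) (front X p q x) = front X p (q + 1) x
  | 0, v, _, hv' => by
    obtain rfl : v = p + 1 := by omega
    rfl
  | q + 1, v, hv, hv' => by
    obtain rfl | hv' : v = p + q + 2 ∨ v ≤ p + q + 1 := by omega
    · rfl
    have hδδ := δ_δ_apply X (i := (⟨v, by omega⟩ : Fin (p + q + 2))) (j := Fin.last (p + q + 1))
      (by simp only [Fin.le_def, Fin.val_last]; omega) (front X p q x)
    exact hδδ.symm.trans (congrArg _ (δ_front_of_gt x q v hv hv'))

lemma δ_back_of_le {q : ℕ} (y : A X q) :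
    ∀ (p v : ℕ) (hv : v ≤ p),
      X.δ (⟨v, by omega⟩ : Fin (q + p + 2)) (back X q p y) = back X q (p + 1) y
  | 0, v, hv => by
    obtain rfl : v = 0 := by omega
    rfl
  | p + 1, 0, _ => rfl
  | p + 1, v + 1, hv =>
    (δ_δ_apply X (i := 0) (j := (⟨v, by omega⟩ : Fin (q + p + 2))) (Fin.zero_le _)
      (back X q p y)).trans (congrArg _ (δ_back_of_le y p v (by omega)))

lemma δ_back_of_gt {q : ℕ} (y : A X q) :
    ∀ (p v : ℕ) (hv : p < v) (hv' : v ≤ q + p + 1),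
      X.δ (⟨v, by omega⟩ : Fin (q + p + 2)) (back X q p y) ≍
        back X (q + 1) p (X.δ (⟨v - p, by omega⟩ : Fin (q + 2)) y)
  | 0, _, _, _ => .rfl
  | p + 1, v + 1, hv, hv' => by
    have hδδ := δ_δ_apply X (i := 0) (j := (⟨v, by omega⟩ : Fin (q + p + 2))) (Fin.zero_le _)
      (back X q p y)
    simp only [Nat.add_sub_add_right]
    exact (heq_of_eq hδδ).trans <|
      δ_heq_δ X (by omega) (by simp) (δ_back_of_gt y p v (by omega) (by omega))

lemma δ_cup_of_le {p q : ℕ} (x : A X p) (y : A X q) (v : ℕ) (hv : v ≤ p) :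
    X.δ (⟨v, by omega⟩ : Fin (p + q + 2)) (cup X x y) ≍
      cup X (X.δ (⟨v, by omega⟩ : Fin (p + 2)) x) y := by
  refine (heq_of_eq (map_mul _ _ _)).trans (mul_heq_mul X (by omega) (δ_front_of_le X x q v hv) ?_)
  refine (δ_heq_δ X (Nat.add_comm p q) (i' := ⟨v, by omega⟩) rfl (cast_heq_self X _ _)).trans ?_
  rw [δ_back_of_le X y p v hv]
  exact (cast_heq_self X _ _).symm

lemma δ_cup_of_gt {p q : ℕ} (x : A X p) (y : A X q) (v : ℕ) (hv : p < v) (hv' : v ≤ p + q + 1) :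
    X.δ (⟨v, by omega⟩ : Fin (p + q + 2)) (cup X x y) =
      cup X x (X.δ (⟨v - p, by omega⟩ : Fin (q + 2)) y) := by
  refine (map_mul _ _ _).trans (congrArg₂ _ (δ_front_of_gt X x q v hv hv') (eq_of_heq ?_))
  refine (δ_heq_δ X (Nat.add_comm p q) (i' := ⟨v, by omega⟩) rfl (cast_heq_self X _ _)).trans ?_
  exact (δ_back_of_gt X y p v hv (by omega)).trans (cast_heq_self X _ _).symm

lemma one_cup {n : ℕ} (y : A X n) : cup X (1 : A X 1) y ≍ X.δ 0 y := by
  rw [cup, front_one, one_mul]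
  exact cast_heq_self X _ _

lemma cup_one {n : ℕ} (y : A X n) : cup X y (1 : A X 1) = X.δ (Fin.last (n + 1)) y := by
  rw [cup, back_one, cast_one, mul_one]
  rfl

end AlexanderWhitney

section Generation

variable {X : CosimplicialObject (AlgCat k)} {S : ∀ n : ℕ, Set (A X n)} {n : ℕ}

lemma CupGen.mono {T : ∀ n : ℕ, Set (A X n)} (hST : ∀ n, S n ⊆ T n) {x : A X n}
    (hx : CupGen X S n x) : CupGen X T n x := by
  induction hx with
  | of hx => exact .of (hST _ hx)
  | zero => exact .zero
  | add _ _ ihx ihy => exact .add ihx ihy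
  | smul c _ ih => exact .smul c ih
  | cup _ _ ihx ihy => exact .cup ihx ihy

lemma CupGen.of_heq {m m' : ℕ} (e : m = m') {a : A X m} {b : A X m'} (hab : a ≍ b)
    (hb : CupGen X S m' b) : CupGen X S m a := by
  subst e
  cases hab
  exact hb

lemma CupGen.δ_zero (h1 : CupGen X S 1 1) {x : A X n} (hx : CupGen X S n x) :
    CupGen X S (n + 1) (X.δ 0 x) :=
  .of_heq (Nat.add_comm n 1) (one_cup X x).symm (.cup h1 hx)

lemma CupGen.δ_last (h1 : CupGen X S 1 1) {x : A X n} (hx : CupGen X S n x) :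
    CupGen X S (n + 1) (X.δ (Fin.last (n + 1)) x) :=
  cup_one X x ▸ .cup hx h1

lemma CupGen.δ (hS : ∀ n, ∀ y ∈ S n, ∀ j : Fin (n + 2), CupGen X S (n + 1) (X.δ j y))
    {x : A X n} (hx : CupGen X S n x) (j : Fin (n + 2)) : CupGen X S (n + 1) (X.δ j x) := by
  induction hx with
  | of hy => exact hS _ _ hy j
  | zero =>
    rw [map_zero]
    exact .zero
  | add _ _ ihx ihy =>
    rw [map_add]
    exact .add (ihx j) (ihy j)
  | smul c _ ih =>
    rw [map_smul]
    exact .smul c (ih j)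
  | @cup p q x y hx hy ihx ihy =>
    obtain ⟨v, hv⟩ := j
    by_cases hvp : v ≤ p
    · exact .of_heq (by omega) (δ_cup_of_le X x y v hvp) (.cup (ihx ⟨v, by omega⟩) hy)
    · rw [δ_cup_of_gt X x y v (by omega) (by omega)]
      exact .cup hx (ihy _)

end Generation

section DegreesZeroAndOne

variable (X : CosimplicialObject (AlgCat k))

lemma gensN_subset_gensC : ∀ n, gensN X n ⊆ gensC X n
  | 0 => subset_rfl
  | 1 => Set.subset_univ _
  | _ + 2 => subset_rfl

lemma δ_sub_δ_add_δ_mem_Nrm {ν : A X 1} (hν : ν ∈ Nrm X 1) :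
    X.δ 0 ν - X.δ 1 ν + X.δ 2 ν ∈ Nrm X 2 := by
  have hσν : X.σ 0 ν = 0 := hν 0
  refine Fin.forall_fin_two.mpr ⟨?_, ?_⟩
  · have h0 : X.σ (0 : Fin 2) (X.δ 0 ν) = ν := σ_δ_castSucc_apply X ν
    have h1 : X.σ (0 : Fin 2) (X.δ 1 ν) = ν := σ_δ_succ_apply X ν
    have h2 : X.σ (0 : Fin 2) (X.δ 2 ν) = X.δ 1 (X.σ 0 ν) :=
      σ_δ_apply_of_gt X (n := 0) (i := 1) (j := 0) Fin.zero_lt_one ν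
    rw [map_add, map_sub, h0, h1, h2, hσν, map_zero, sub_self, add_zero]
  · have h0 : X.σ (1 : Fin 2) (X.δ 0 ν) = X.δ 0 (X.σ 0 ν) :=
      σ_δ_apply_of_le X (i := 0) (j := 0) le_rfl ν
    have h1 : X.σ (1 : Fin 2) (X.δ 1 ν) = ν := σ_δ_castSucc_apply X ν
    have h2 : X.σ (1 : Fin 2) (X.δ 2 ν) = ν := σ_δ_succ_apply X ν
    rw [map_add, map_sub, h0, h1, h2, hσν, map_zero, zero_sub, neg_add_cancel]

lemma cupGen_gensC_one (x : A X 1) : CupGen X (gensC X) 1 x := .of trivial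

lemma cupGen_gensC_δ_one_of_mem_Nrm (h : ∀ w ∈ Nrm X 2, CupGen X (gensN X) 2 w) {ν : A X 1}
    (hν : ν ∈ Nrm X 1) : CupGen X (gensC X) 2 (X.δ 1 ν) := by
  have hw := (h _ (δ_sub_δ_add_δ_mem_Nrm X hν)).mono (gensN_subset_gensC X)
  have hδ : X.δ 1 ν = X.δ 0 ν + X.δ 2 ν + (-1 : k) • (X.δ 0 ν - X.δ 1 ν + X.δ 2 ν) := by
    rw [neg_one_smul]
    abel
  rw [hδ]
  have h1 := cupGen_gensC_one X 1
  exact .add (.add (.δ_zero h1 (cupGen_gensC_one X ν)) (.δ_last h1 (cupGen_gensC_one X ν)))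
    (.smul _ hw)

lemma cupGen_gensC_δ_one (h : ∀ w ∈ Nrm X 2, CupGen X (gensN X) 2 w) (x : A X 1) (j : Fin 3) :
    CupGen X (gensC X) 2 (X.δ j x) := by
  have h1 := cupGen_gensC_one X 1
  set a := X.σ 0 x
  have hν : x - X.δ 1 a ∈ Nrm X 1 :=
    Fin.forall_fin_one.mpr <|
      (map_sub _ _ _).trans (sub_eq_zero.mpr (σ_δ_succ_apply X (i := 0) a).symm)
  obtain rfl | rfl | rfl : j = 0 ∨ j = 1 ∨ j = 2 := by fin_cases j <;> simp
  · exact .δ_zero h1 (cupGen_gensC_one X x)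
  · have hδδ : X.δ 1 (X.δ 1 a) = X.δ 2 (X.δ 1 a) := (δ_δ_apply X (le_refl 1) a).symm
    rw [← sub_add_cancel x (X.δ 1 a), map_add, hδδ]
    exact .add (cupGen_gensC_δ_one_of_mem_Nrm X h hν) (.δ_last h1 (cupGen_gensC_one X _))
  · exact .δ_last h1 (cupGen_gensC_one X x)

lemma cupGen_gensC_δ_of_mem (h : ∀ w ∈ Nrm X 2, CupGen X (gensN X) 2 w) :
    ∀ n, ∀ y ∈ gensC X n, ∀ j : Fin (n + 2), CupGen X (gensC X) (n + 1) (X.δ j y)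
  | 0, _, _, _ => cupGen_gensC_one X _
  | 1, y, _, j => cupGen_gensC_δ_one X h y j
  | _ + 2, _, hy, _ => hy.elim

end DegreesZeroAndOne

/-- Lemma `NA_01gen_CA`.  If a cosimplicial (not necessarily
commutative) `k`-algebra `X` is `[0,1]`-generated — i.e. every normalized element is
generated by `N⁰(X)` and `N¹(X)` under cup products and `k`-linear sums — then the
total DG algebra `C(X)` is also generated in degrees `0` and `1` under the cup product
and `k`-linear sums. -/
theorem total_generated_of_normalized_generated (X : CosimplicialObject (AlgCat k))
    (h : ∀ n : ℕ, ∀ x ∈ Nrm X n, CupGen X (gensN X) n x) :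
    ∀ (n : ℕ) (x : A X n), CupGen X (gensC X) n x := by
  intro n
  induction n with
  | zero => exact fun x => .of trivial
  | succ m ih =>
    exact induction_on_normalized X (fun x hx => (h _ x hx).mono (gensN_subset_gensC X))
      (fun j y => (ih y).δ (cupGen_gensC_δ_of_mem X (h 2)) j) (fun _ _ => .add)

end Stmt16
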